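/- arXiv:2303.07867 — 5 statements merged into one kernel-verified Lean document; each statement's English description precedes it below -/
import Mathlib

section
/- If a real number x in [−q/(q+1), 1/(q+1)] has two distinct nega-q-ary digit sequences representing it, then x is nega-q-rational, i.e., one representation ends in the tail (q−1)0(q−1)0… and the other is obtained by decreasing one digit by 1 and appending the tail 0(q−1)0(q−1)…. -/
/-- The nega-`q`-ary value of a digit sequence `i : ℕ → ℕ`,
where `i k` is the digit at (1-based) position `k+1`. -/
noncomputable def negaVal (q : ℕ) (i : ℕ → ℕ) : ℝ :=
  ∑' k : ℕ, (i k : ℝ) / (-(q : ℝ)) ^ (k + 1)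

/-- `a` and `b` agree before position `m`, `b`'s `m`-th digit is one less than `a`'s,
`a` ends in the tail `(q-1) 0 (q-1) 0 …` and `b` ends in the tail `0 (q-1) 0 (q-1) …`
(starting at position `m+1`).  (Positions are 1-based; index `k` is position `k+1`.) -/
def TailPattern (q m : ℕ) (a b : ℕ → ℕ) : Prop :=
  1 ≤ m ∧ (∀ k, k < m - 1 → a k = b k) ∧ 1 ≤ a (m - 1) ∧ b (m - 1) = a (m - 1) - 1 ∧
    (∀ j : ℕ, a (m + j) = if Even j then q - 1 else 0) ∧
    (∀ j : ℕ, b (m + j) = if Even j then 0 else q - 1)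

/-!
Let two nega-`q`-ary expansions of the same number first differ at position `n + 1`, where `a`
has the larger digit. Multiplying the difference of the expansions by `(-q) ^ (n + 1)` shows that
the digit difference `a n - b n ≥ 1` equals `∑ (-1) ^ j (a - b) (n + 1 + j) / q ^ (j + 1)`. Every
numerator is at most `q - 1` in absolute value, so this sum is at most `∑ (q - 1) / q ^ (j + 1) = 1`,
with equality only if every numerator equals `q - 1`. Hence `a n = b n + 1`, and the later digit
differences alternate between `q - 1` and `-(q - 1)`, which for digits in `[0, q)` forces the
two tails.
-/

lemma summable_div_pow_of_abs_le {r : ℝ} (hr : 1 < |r|) {f : ℕ → ℝ} {C : ℝ}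
    (hf : ∀ k, |f k| ≤ C) : Summable fun k => f k / r ^ (k + 1) := by
  have hgeom : Summable fun k : ℕ => C * |r|⁻¹ ^ (k + 1) :=
    ((summable_nat_add_iff 1).mpr
      (summable_geometric_of_lt_one (by positivity) (inv_lt_one_of_one_lt₀ hr))).mul_left C
  refine hgeom.of_norm_bounded fun k => ?_
  rw [norm_div, norm_pow, Real.norm_eq_abs, Real.norm_eq_abs, inv_pow, div_eq_mul_inv]
  exact mul_le_mul_of_nonneg_right (hf k) (by positivity)

lemma hasSum_sub_one_div_pow {q : ℝ} (hq : 1 < q) :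
    HasSum (fun j : ℕ => (q - 1) / q ^ (j + 1)) 1 := by
  have hq0 : q ≠ 0 := by positivity
  have h := (hasSum_geometric_of_lt_one (by positivity) (inv_lt_one_of_one_lt₀ hq)).mul_left
    ((q - 1) / q)
  have hsum : (q - 1) / q * (1 - q⁻¹)⁻¹ = 1 := by
    have : q - 1 ≠ 0 := by linarith
    field_simp
  rw [hsum] at h
  refine h.congr_fun fun j => ?_
  rw [pow_succ', inv_pow]
  field_simp

lemma eq_sub_one_of_one_le_tsum_div_pow {q : ℝ} (hq : 1 < q) {c : ℕ → ℝ}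
    (hc : ∀ j, |c j| ≤ q - 1) (h : 1 ≤ ∑' j, c j / q ^ (j + 1)) (j : ℕ) : c j = q - 1 := by
  by_contra hne
  have hq0 : 0 < q := by linarith
  have hlt : ∑' j, c j / q ^ (j + 1) < ∑' j, (q - 1) / q ^ (j + 1) :=
    Summable.tsum_lt_tsum (i := j)
      (fun i => by gcongr; exact (le_abs_self _).trans (hc i))
      (by gcongr; exact lt_of_le_of_ne ((le_abs_self _).trans (hc j)) hne)
      (summable_div_pow_of_abs_le (by rwa [abs_of_pos hq0]) hc)
      (hasSum_sub_one_div_pow hq).summable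
  rw [(hasSum_sub_one_div_pow hq).tsum_eq] at hlt
  linarith

lemma eq_neg_tsum_shift_of_tsum_div_pow_eq_zero {r : ℝ} (hr : r ≠ 0) {f : ℕ → ℝ}
    (hs : Summable fun k => f k / r ^ (k + 1)) (h0 : ∑' k, f k / r ^ (k + 1) = 0) {n : ℕ}
    (hlow : ∀ k < n, f k = 0) : f n = -∑' j, f (n + 1 + j) / r ^ (j + 1) := by
  have hsplit := hs.sum_add_tsum_nat_add (n + 1)
  rw [h0, Finset.sum_range_succ, Finset.sum_eq_zero fun k hk => by
    rw [hlow k (Finset.mem_range.mp hk), zero_div]] at hsplit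
  have htail : ∀ i, f (i + (n + 1)) / r ^ (i + (n + 1) + 1)
      = f (n + 1 + i) / r ^ (i + 1) / r ^ (n + 1) := fun i => by
    rw [add_comm i (n + 1), div_div, ← pow_add]; ring_nf
  rw [tsum_congr htail, tsum_div_const] at hsplit
  field_simp at hsplit
  linarith

lemma neg_div_neg_pow_succ (x q : ℝ) (j : ℕ) :
    -(x / (-q) ^ (j + 1)) = (-1) ^ j * x / q ^ (j + 1) := by
  rw [neg_pow q, pow_succ (-1 : ℝ)]
  rcases neg_one_pow_eq_or ℝ j with h | h <;> rw [h] <;> ring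

lemma abs_cast_sub_cast_le {q a b : ℕ} (ha : a < q) (hb : b < q) : |(a : ℝ) - b| ≤ q - 1 := by
  have ha' : (a : ℝ) + 1 ≤ q := by exact_mod_cast ha
  have hb' : (b : ℝ) + 1 ≤ q := by exact_mod_cast hb
  rw [abs_le]
  constructor <;> linarith [a.cast_nonneg (α := ℝ), b.cast_nonneg (α := ℝ)]

lemma eq_sub_one_and_eq_zero_of_cast_sub_eq {q a b : ℕ} (ha : a < q) (hb : b < q)
    (h : (a : ℝ) - b = q - 1) : a = q - 1 ∧ b = 0 := by
  have : (a : ℤ) - b = q - 1 := by exact_mod_cast h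
  omega

lemma digits_of_neg_one_pow_mul_cast_sub_eq {q a b : ℕ} (ha : a < q) (hb : b < q) {j : ℕ}
    (h : (-1) ^ j * ((a : ℝ) - b) = q - 1) :
    (a = if Even j then q - 1 else 0) ∧ (b = if Even j then 0 else q - 1) := by
  rcases Nat.even_or_odd j with hj | hj
  · rw [hj.neg_one_pow, one_mul] at h
    simpa [hj] using eq_sub_one_and_eq_zero_of_cast_sub_eq ha hb h
  · rw [hj.neg_one_pow, neg_one_mul, neg_sub] at h
    simpa [Nat.not_even_iff_odd.mpr hj, and_comm] using
      eq_sub_one_and_eq_zero_of_cast_sub_eq hb ha h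

lemma tailPattern_of_negaVal_eq {q : ℕ} (hq : 1 < q) {a b : ℕ → ℕ} (ha : ∀ k, a k < q)
    (hb : ∀ k, b k < q) (hv : negaVal q a = negaVal q b) {n : ℕ}
    (hlow : ∀ k < n, a k = b k) (hn : b n < a n) : TailPattern q (n + 1) a b := by
  have hq' : (1 : ℝ) < q := by exact_mod_cast hq
  have hq0 : (0 : ℝ) < q := by linarith
  set f : ℕ → ℝ := fun k => (a k : ℝ) - b k with hf_def
  have hf : ∀ k, |f k| ≤ q - 1 := fun k => abs_cast_sub_cast_le (ha k) (hb k)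
  have hr : 1 < |(-(q : ℝ))| := by rwa [abs_neg, abs_of_pos hq0]
  have hs : ∀ i : ℕ → ℕ, (∀ k, i k < q) →
      Summable fun k => (i k : ℝ) / (-(q : ℝ)) ^ (k + 1) := fun i hi =>
    summable_div_pow_of_abs_le hr (C := q) fun k => by
      rw [Nat.abs_cast]; exact_mod_cast (hi k).le
  have hzero : ∑' k, f k / (-(q : ℝ)) ^ (k + 1) = 0 := by
    simp only [hf_def, sub_div]
    rw [(hs a ha).tsum_sub (hs b hb)]
    exact sub_eq_zero.mpr hv
  have hshift : f n = ∑' j, (-1) ^ j * f (n + 1 + j) / (q : ℝ) ^ (j + 1) := by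
    rw [eq_neg_tsum_shift_of_tsum_div_pow_eq_zero (neg_ne_zero.mpr hq0.ne')
      (summable_div_pow_of_abs_le hr hf) hzero
      (fun k hk => by simp [hf_def, hlow k hk]), ← tsum_neg]
    exact tsum_congr fun j => neg_div_neg_pow_succ _ _ j
  have htail : ∀ j, (-1) ^ j * f (n + 1 + j) = q - 1 := by
    refine eq_sub_one_of_one_le_tsum_div_pow hq' (fun j => ?_) ?_
    · rw [abs_mul, abs_pow, abs_neg, abs_one, one_pow, one_mul]; exact hf _
    · rw [← hshift, hf_def, le_sub_iff_add_le']; exact_mod_cast hn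
  have hfn : f n = 1 := by
    rw [hshift, tsum_congr fun j => by rw [htail j], (hasSum_sub_one_div_pow hq').tsum_eq]
  have hdigits : ∀ j, (a (n + 1 + j) = if Even j then q - 1 else 0) ∧
      (b (n + 1 + j) = if Even j then 0 else q - 1) := fun j =>
    digits_of_neg_one_pow_mul_cast_sub_eq (ha _) (hb _) (htail j)
  have hsucc : a n = b n + 1 := by
    have : (a n : ℝ) = b n + 1 := by simp only [hf_def] at hfn; linarith
    exact_mod_cast this
  refine ⟨by omega, ?_, ?_, ?_, fun j => (hdigits j).1, fun j => (hdigits j).2⟩ <;>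
    simp only [Nat.add_sub_cancel]
  · exact hlow
  · omega
  · omega

theorem two_distinct_representations_implies_nega_q_rational_general
    (q : ℕ) (hq : 1 < q) (x : ℝ)
    (a b : ℕ → ℕ) (ha : ∀ k, a k < q) (hb : ∀ k, b k < q)
    (hav : negaVal q a = x) (hbv : negaVal q b = x) (hab : a ≠ b) :
    ∃ m : ℕ, TailPattern q m a b ∨ TailPattern q m b a := by
  have hex : ∃ k, a k ≠ b k := Function.ne_iff.mp hab
  set n := Nat.find hex
  have hlow : ∀ k < n, a k = b k := fun k hk => not_not.mp (Nat.find_min hex hk)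
  have hv : negaVal q a = negaVal q b := hav.trans hbv.symm
  refine ⟨n + 1, ?_⟩
  rcases lt_or_gt_of_ne (Nat.find_spec hex) with h | h
  · exact Or.inr (tailPattern_of_negaVal_eq hq hb ha hv.symm (fun k hk => (hlow k hk).symm) h)
  · exact Or.inl (tailPattern_of_negaVal_eq hq ha hb hv hlow h)

theorem two_distinct_representations_implies_nega_q_rational
    (q : ℕ) (hq : 1 < q) (x : ℝ)
    (hx : x ∈ Set.Icc (-(q : ℝ) / ((q : ℝ) + 1)) (1 / ((q : ℝ) + 1)))
    (a b : ℕ → ℕ) (ha : ∀ k, a k < q) (hb : ∀ k, b k < q)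
    (hav : negaVal q a = x) (hbv : negaVal q b = x) (hab : a ≠ b) :
    ∃ m : ℕ, TailPattern q m a b ∨ TailPattern q m b a :=
  two_distinct_representations_implies_nega_q_rational_general q hq x a b ha hb hav hbv hab
end

section
/- Let q > 1 be an integer, p_0,…,p_{q−1} ∈ (−1,1) with ∑_j p_j = 1, β_0 = 0, β_i = ∑_{j<i} p_j, and (n_k) a bijective enumeration of the positive integers. Suppose f is a bounded function on digit sequences satisfying the system f(s) = β̈_{s(n_1)} + p̈_{s(n_1)}·f(delete_{n_1}(s)) and more generally, for all k, f applied to the sequence with digits at positions n_1,…,n_{k−1} deleted equals β̈_{i_{n_k}} + p̈_{i_{n_k}} times f of the sequence with digits at positions n_1,…,n_k deleted. Then f(s) = β̈_{i_{n_1}} + ∑_{k=2}^∞ (β̈_{i_{n_k}} ∏_{r=1}^{k−1} p̈_{i_{n_r}}), and this solution is unique among bounded functions. -/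
/-- `β_i = p_0 + … + p_{i-1}` (so `β_0 = 0`). -/
noncomputable def beta (p : ℕ → ℝ) (i : ℕ) : ℝ := ∑ j ∈ Finset.range i, p j

/-- Parity-modified `β̈`. -/
noncomputable def ddBeta (q : ℕ) (p : ℕ → ℝ) (i pos : ℕ) : ℝ :=
  if Even pos then beta p i else beta p (q - 1 - i)

/-- Parity-modified `p̈`. -/
noncomputable def ddP (q : ℕ) (p : ℕ → ℝ) (i pos : ℕ) : ℝ :=
  if Even pos then p i else p (q - 1 - i)

/-- The digit sequence remaining after the entries of `s` at the (1-based)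
positions `n 0, n 1, …, n (k-1)` have been deleted (in the paper's notation,
`σ_{\hat n_k} ∘ ⋯ ∘ σ_{\hat n_1}` applied to `s`).  Index `j` of the result is
the `j`-th surviving entry. -/
noncomputable def surv (n : ℕ → ℕ) (k : ℕ) (s : ℕ → ℕ) : ℕ → ℕ :=
  fun j => s (Nat.nth (fun m => ∀ r < k, n r ≠ m + 1) j)

/-! Unrolling the system along a fixed digit sequence `s` gives, for every `K`,
`f s = ∑_{k<K} β̈_k ∏_{r<k} p̈_r + (∏_{r<K} p̈_r) · f (surv n K s)`.
Finitely many digits occur and every `|p_j| < 1`, so `|p̈| ≤ c` for one `c < 1`; with `|f| ≤ M`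
the remainder is at most `c^K M`, hence tends to `0`, and the series converges absolutely to `f s`. -/

open Filter Topology Finset

section Recurrence

variable {R : Type*} [NormedCommRing R] {a d g : ℕ → R}

theorem eq_sum_range_add_prod_mul (hrec : ∀ k, g k = a k + d k * g (k + 1)) (K : ℕ) :
    g 0 = ∑ k ∈ range K, a k * ∏ r ∈ range k, d r + (∏ r ∈ range K, d r) * g K := by
  induction K with
  | zero => simp
  | succ K ih => rw [ih, hrec K, sum_range_succ, prod_range_succ]; ring

theorem norm_prod_range_le_pow [NormOneClass R] {c : ℝ} (hd : ∀ k, ‖d k‖ ≤ c) (K : ℕ) :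
    ‖∏ r ∈ range K, d r‖ ≤ c ^ K :=
  calc ‖∏ r ∈ range K, d r‖ ≤ ∏ r ∈ range K, ‖d r‖ := norm_prod_le _ _
    _ ≤ ∏ _r ∈ range K, c := prod_le_prod (fun _ _ => norm_nonneg _) fun r _ => hd r
    _ = c ^ K := by rw [prod_const, card_range]

theorem hasSum_of_forall_eq_add_mul [NormOneClass R] {c M : ℝ} (hc : c < 1) (hd : ∀ k, ‖d k‖ ≤ c)
    (hg : ∀ k, ‖g k‖ ≤ M) (hrec : ∀ k, g k = a k + d k * g (k + 1)) :
    HasSum (fun k => a k * ∏ r ∈ range k, d r) (g 0) := by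
  have hc0 : 0 ≤ c := (norm_nonneg _).trans (hd 0)
  have hM0 : 0 ≤ M := (norm_nonneg _).trans (hg 0)
  have hprod := norm_prod_range_le_pow hd
  have ha k : ‖a k‖ ≤ (1 + c) * M :=
    calc ‖a k‖ = ‖g k - d k * g (k + 1)‖ := by rw [hrec k, add_sub_cancel_right]
      _ ≤ ‖g k‖ + ‖d k‖ * ‖g (k + 1)‖ := (norm_sub_le _ _).trans (by gcongr; exact norm_mul_le _ _)
      _ ≤ M + c * M := by gcongr; exacts [hg k, hd k, hg (k + 1)]
      _ = (1 + c) * M := by ring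
  have hsummable : Summable fun k => ‖a k * ∏ r ∈ range k, d r‖ :=
    ((summable_geometric_of_lt_one hc0 hc).mul_left ((1 + c) * M)).of_nonneg_of_le
      (fun _ => norm_nonneg _) fun k =>
        (norm_mul_le _ _).trans (mul_le_mul (ha k) (hprod k) (norm_nonneg _) (by positivity))
  have htail : Tendsto (fun K => (∏ r ∈ range K, d r) * g K) atTop (𝓝 0) :=
    squeeze_zero_norm
      (fun K => (norm_mul_le _ _).trans (mul_le_mul (hprod K) (hg K) (norm_nonneg _) (by positivity)))
      (by simpa using (tendsto_pow_atTop_nhds_zero_of_lt_one hc0 hc).mul_const M)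
  have hpartial : Tendsto (fun K => g 0 - (∏ r ∈ range K, d r) * g K) atTop (𝓝 (g 0)) := by
    simpa using tendsto_const_nhds.sub htail
  rw [hasSum_iff_tendsto_nat_of_summable_norm hsummable]
  refine hpartial.congr fun K => ?_
  rw [eq_sum_range_add_prod_mul hrec K, add_sub_cancel_right]

end Recurrence

theorem exists_lt_one_forall_abs_le {q : ℕ} {p : ℕ → ℝ}
    (hp : ∀ j < q, p j ∈ Set.Ioo (-1 : ℝ) 1) : ∃ c < 1, ∀ j < q, |p j| ≤ c := by
  have hev : ∀ᶠ c in 𝓝[<] (1 : ℝ), ∀ j ∈ range q, |p j| ≤ c :=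
    (eventually_all_finset _).2 fun j hj => nhdsWithin_le_nhds <|
      (eventually_gt_nhds (abs_lt.2 (hp j (mem_range.1 hj)))).mono fun _ => le_of_lt
  obtain ⟨c, hc, hc1⟩ := (hev.and self_mem_nhdsWithin).exists
  exact ⟨c, hc1, fun j hj => hc j (mem_range.2 hj)⟩

theorem abs_ddP_le {q : ℕ} {p : ℕ → ℝ} {c : ℝ} (hc : ∀ j < q, |p j| ≤ c) {i : ℕ} (hi : i < q)
    (pos : ℕ) : |ddP q p i pos| ≤ c := by
  unfold ddP
  split_ifs
  exacts [hc i hi, hc _ (by omega)]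

@[simp]
theorem surv_zero (n s : ℕ → ℕ) : surv n 0 s = s := by
  funext j
  simp [surv]

theorem functional_system_unique_bounded_solution_general
    (q : ℕ) (p : ℕ → ℝ)
    (hp : ∀ j < q, p j ∈ Set.Ioo (-1 : ℝ) 1)
    (n : ℕ → ℕ)
    (f : (ℕ → ℕ) → ℝ) (M : ℝ)
    (hbd : ∀ s : ℕ → ℕ, (∀ k, s k < q) → |f s| ≤ M)
    (heq : ∀ s : ℕ → ℕ, (∀ k, s k < q) → ∀ k : ℕ,
      f (surv n k s) =
        ddBeta q p (s (n k - 1)) (n k) +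
          ddP q p (s (n k - 1)) (n k) * f (surv n (k + 1) s)) :
    ∀ s : ℕ → ℕ, (∀ k, s k < q) →
      f s = ∑' k : ℕ,
        ddBeta q p (s (n k - 1)) (n k) *
          ∏ r ∈ Finset.range k, ddP q p (s (n r - 1)) (n r) := by
  intro s hs
  obtain ⟨c, hc1, hpc⟩ := exists_lt_one_forall_abs_le hp
  have hsum := hasSum_of_forall_eq_add_mul (g := fun k => f (surv n k s)) hc1
    (fun k => abs_ddP_le hpc (hs _) (n k)) (fun k => hbd _ fun _ => hs _) (heq s hs)
  rw [surv_zero] at hsum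
  exact hsum.tsum_eq.symm

/-- The system of functional equations
`f(σ_{\hat n_{k-1}} ∘ ⋯ ∘ σ_{\hat n_1}(x)) = β̈_{i_{n_k}} + p̈_{i_{n_k}} · f(σ_{\hat n_k} ∘ ⋯ ∘ σ_{\hat n_1}(x))`
has the series `β̈_{i_{n_1}} + ∑_{k≥2} β̈_{i_{n_k}} ∏_{r<k} p̈_{i_{n_r}}` as its
unique bounded solution. -/
theorem functional_system_unique_bounded_solution
    (q : ℕ) (hq : 1 < q) (p : ℕ → ℝ)
    (hp : ∀ j < q, p j ∈ Set.Ioo (-1 : ℝ) 1)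
    (hps : ∑ j ∈ Finset.range q, p j = 1)
    (n : ℕ → ℕ) (hn1 : ∀ k, 1 ≤ n k) (hninj : Function.Injective n)
    (hnsurj : ∀ m, 1 ≤ m → ∃ k, n k = m)
    (f : (ℕ → ℕ) → ℝ) (M : ℝ)
    (hbd : ∀ s : ℕ → ℕ, (∀ k, s k < q) → |f s| ≤ M)
    (heq : ∀ s : ℕ → ℕ, (∀ k, s k < q) → ∀ k : ℕ,
      f (surv n k s) =
        ddBeta q p (s (n k - 1)) (n k) +
          ddP q p (s (n k - 1)) (n k) * f (surv n (k + 1) s)) :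
    ∀ s : ℕ → ℕ, (∀ k, s k < q) →
      f s = ∑' k : ℕ,
        ddBeta q p (s (n k - 1)) (n k) *
          ∏ r ∈ Finset.range k, ddP q p (s (n r - 1)) (n r) :=
  functional_system_unique_bounded_solution_general q p hp n f M hbd heq
end

section
/- Let q > 1, p_0,…,p_{q−1} > 0 with ∑ p_j = 1, and let h be the generalized Salem function defined on digit sequences by h((i_k)) = β̈_{i_{n_1}} + ∑_{k=2}^∞ (β̈_{i_{n_k}} ∏_{r=1}^{k−1} p̈_{i_{n_r}}), with (n_k) a bijective enumeration of ℕ. If x_0 ∈ [−q/(q+1), 1/(q+1)] has a unique nega-q-ary representation (is nega-q-irrational), then h (regarded as a function of the real number x via its nega-q representation) is continuous at x_0. -/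
/-- The generalized Salem series of a digit sequence `i`, for the enumeration
`n` of the positive integers (`n k` is the paper's `n_{k+1}`). -/
noncomputable def salemVal (q : ℕ) (p : ℕ → ℝ) (n : ℕ → ℕ) (i : ℕ → ℕ) : ℝ :=
  ∑' k : ℕ,
    ddBeta q p (i (n k - 1)) (n k) *
      ∏ r ∈ Finset.range k, ddP q p (i (n r - 1)) (n r)

/-!
Digit sequences with all digits below `q` form a compact subset of `ℕ → ℕ` (product of discrete
spaces), on which both the nega-`q` value and the Salem series are continuous, being uniform
limits of functions of finitely many digits: their `k`-th terms are bounded by `q⁻¹ ^ k` and by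
`P ^ k`, where `P = max p_j < 1`. If `x₀` has a single representation, the fibre of the nega-`q`
value over `x₀` is one point, and compactness forces any choice of representations `D` to be
continuous at `x₀`; composing with the Salem series gives the theorem.
-/

open Set Filter Topology

theorem IsCompact.continuousWithinAt_of_leftInvOn {X Y : Type*} [TopologicalSpace X]
    [TopologicalSpace Y] [T2Space Y] {K : Set X} (hK : IsCompact K) {F : X → Y}
    (hF : ContinuousOn F K) {d : Y → X} {s : Set Y} (hds : MapsTo d s K)
    (hFd : LeftInvOn F d s) {y₀ : Y} (hfiber : ∀ x ∈ K, F x = y₀ → x = d y₀) :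
    ContinuousWithinAt d s y₀ := by
  rw [ContinuousWithinAt, tendsto_nhds]
  intro U hU hdU
  have hclosed : IsClosed (F '' (K \ U)) :=
    ((hK.diff hU).image_of_continuousOn (hF.mono sdiff_subset)).isClosed
  have hy₀ : y₀ ∉ F '' (K \ U) := by
    rintro ⟨x, ⟨hxK, hxU⟩, hFx⟩
    exact hxU (hfiber x hxK hFx ▸ hdU)
  filter_upwards [mem_nhdsWithin_of_mem_nhds (hclosed.isOpen_compl.mem_nhds hy₀),
    self_mem_nhdsWithin] with y hy hys
  by_contra hdyU
  exact hy ⟨d y, ⟨hds hys, hdyU⟩, hFd hys⟩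

def digitSeqs (q : ℕ) : Set (ℕ → ℕ) := {j | ∀ k, j k < q}

theorem isCompact_digitSeqs (q : ℕ) : IsCompact (digitSeqs q) := by
  have : digitSeqs q = univ.pi fun _ => Iio q := by ext j; simp [digitSeqs]
  rw [this]
  exact isCompact_univ_pi fun _ => (finite_Iio q).isCompact

theorem continuous_comp_apply_of_discrete {ι α β : Type*} [TopologicalSpace α]
    [DiscreteTopology α] [TopologicalSpace β] (g : α → β) (m : ι) :
    Continuous fun j : ι → α => g (j m) :=
  continuous_of_discreteTopology.comp (continuous_apply m)

theorem continuousOn_negaVal {q : ℕ} (hq : 1 < q) : ContinuousOn (negaVal q) (digitSeqs q) := by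
  have hterm (k : ℕ) :=
    continuous_comp_apply_of_discrete (fun m : ℕ => (m : ℝ) / (-(q : ℝ)) ^ (k + 1)) k
  refine continuousOn_tsum (u := fun k => (q : ℝ)⁻¹ ^ k) (fun k => (hterm k).continuousOn)
    (summable_geometric_of_lt_one (by positivity) (inv_lt_one_of_one_lt₀ (by exact_mod_cast hq)))
    fun k j hj => ?_
  rw [norm_div, norm_pow, norm_neg, Real.norm_natCast, Real.norm_natCast,
    div_le_iff₀ (by positivity), inv_pow, pow_succ, ← mul_assoc,
    inv_mul_cancel₀ (by positivity), one_mul]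
  exact_mod_cast (hj k).le

section Salem

variable {q : ℕ} {p : ℕ → ℝ}

theorem exists_ddP_eq {i : ℕ} (hi : i < q) (pos : ℕ) : ∃ j < q, ddP q p i pos = p j := by
  unfold ddP
  split_ifs
  exacts [⟨i, hi, rfl⟩, ⟨q - 1 - i, by omega, rfl⟩]

theorem exists_ddBeta_eq {i : ℕ} (hi : i < q) (pos : ℕ) :
    ∃ j < q, ddBeta q p i pos = beta p j := by
  unfold ddBeta
  split_ifs
  exacts [⟨i, hi, rfl⟩, ⟨q - 1 - i, by omega, rfl⟩]

variable (hp : ∀ j < q, 0 < p j) (hps : ∑ j ∈ Finset.range q, p j = 1)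
include hp hps

theorem beta_mem_Icc {i : ℕ} (hi : i ≤ q) : beta p i ∈ Icc 0 1 := by
  have hnonneg : ∀ j ∈ Finset.range q, 0 ≤ p j :=
    fun j hj => (hp j (Finset.mem_range.1 hj)).le
  refine ⟨Finset.sum_nonneg fun j hj => hnonneg j (Finset.range_subset_range.2 hi hj), ?_⟩
  rw [beta, ← hps]
  exact Finset.sum_le_sum_of_subset_of_nonneg (Finset.range_subset_range.2 hi)
    fun j hj _ => hnonneg j hj

theorem p_lt_one (hq : 1 < q) {i : ℕ} (hi : i < q) : p i < 1 := by
  rw [← hps]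
  refine Finset.single_lt_sum (j := if i = 0 then 1 else 0) (by split_ifs <;> omega)
    (Finset.mem_range.2 hi) (Finset.mem_range.2 (by split_ifs <;> omega))
    (hp _ (by split_ifs <;> omega)) fun k hk _ => (hp k (Finset.mem_range.1 hk)).le

theorem exists_lt_one_forall_le (hq : 1 < q) : ∃ P < 1, ∀ j < q, p j ≤ P := by
  have hne : (Finset.range q).Nonempty := Finset.nonempty_range_iff.2 (by omega)
  refine ⟨(Finset.range q).sup' hne p, ?_, fun j hj => Finset.le_sup' p (Finset.mem_range.2 hj)⟩
  exact (Finset.sup'_lt_iff hne).2 fun i hi => p_lt_one hp hps hq (Finset.mem_range.1 hi)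

theorem norm_salemTerm_le {P : ℝ} (hP : ∀ j < q, p j ≤ P) (n : ℕ → ℕ) {i : ℕ → ℕ}
    (hi : i ∈ digitSeqs q) (k : ℕ) :
    ‖ddBeta q p (i (n k - 1)) (n k) * ∏ r ∈ Finset.range k, ddP q p (i (n r - 1)) (n r)‖
      ≤ P ^ k := by
  obtain ⟨b, hb, hβ⟩ := exists_ddBeta_eq (p := p) (hi (n k - 1)) (n k)
  have hβ01 := beta_mem_Icc hp hps hb.le
  have hddP (r : ℕ) : ddP q p (i (n r - 1)) (n r) ∈ Icc 0 P := by
    obtain ⟨j, hj, hpj⟩ := exists_ddP_eq (p := p) (hi (n r - 1)) (n r)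
    exact hpj ▸ ⟨(hp j hj).le, hP j hj⟩
  have hprod_nonneg := Finset.prod_nonneg (s := Finset.range k) fun r _ => (hddP r).1
  have hprod : ∏ r ∈ Finset.range k, ddP q p (i (n r - 1)) (n r) ≤ P ^ k := by
    simpa using Finset.prod_le_prod (s := Finset.range k) (fun r _ => (hddP r).1)
      fun r _ => (hddP r).2
  rw [norm_mul, hβ, Real.norm_of_nonneg hβ01.1, Real.norm_of_nonneg hprod_nonneg]
  exact (mul_le_of_le_one_left hprod_nonneg hβ01.2).trans hprod

theorem continuousOn_salemVal (hq : 1 < q) (n : ℕ → ℕ) :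
    ContinuousOn (salemVal q p n) (digitSeqs q) := by
  obtain ⟨P, hP1, hP⟩ := exists_lt_one_forall_le hp hps hq
  have hP0 : 0 ≤ P := (hp 0 (by omega)).le.trans (hP 0 (by omega))
  refine continuousOn_tsum (fun k => Continuous.continuousOn ?_)
    (summable_geometric_of_lt_one hP0 hP1) fun k i hi => norm_salemTerm_le hp hps hP n hi k
  exact (continuous_comp_apply_of_discrete (fun m => ddBeta q p m (n k)) (n k - 1)).mul
    (continuous_finsetProd _ fun r _ =>
      continuous_comp_apply_of_discrete (fun m => ddP q p m (n r)) (n r - 1))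

end Salem

theorem salem_continuous_at_nega_q_irrational_general
    (q : ℕ) (hq : 1 < q) (p : ℕ → ℝ)
    (hp : ∀ j < q, 0 < p j)
    (hps : ∑ j ∈ Finset.range q, p j = 1)
    (n : ℕ → ℕ)
    (D : ℝ → ℕ → ℕ)
    (hD : ∀ x ∈ Set.Icc (-(q : ℝ) / ((q : ℝ) + 1)) (1 / ((q : ℝ) + 1)),
      (∀ k, D x k < q) ∧ negaVal q (D x) = x)
    (x₀ : ℝ) (hx₀ : x₀ ∈ Set.Icc (-(q : ℝ) / ((q : ℝ) + 1)) (1 / ((q : ℝ) + 1)))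
    (huniq : ∀ j : ℕ → ℕ, (∀ k, j k < q) → negaVal q j = x₀ → j = D x₀) :
    ContinuousWithinAt (fun x => salemVal q p n (D x))
      (Set.Icc (-(q : ℝ) / ((q : ℝ) + 1)) (1 / ((q : ℝ) + 1))) x₀ := by
  have hDs : MapsTo D (Icc (-(q : ℝ) / ((q : ℝ) + 1)) (1 / ((q : ℝ) + 1))) (digitSeqs q) :=
    fun x hx => (hD x hx).1
  have hD_cont := (isCompact_digitSeqs q).continuousWithinAt_of_leftInvOn
    (continuousOn_negaVal hq) hDs (fun x hx => (hD x hx).2) huniq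
  exact (continuousOn_salemVal hp hps hq n (D x₀) (hDs hx₀)).comp hD_cont hDs

/-- If `x₀ ∈ [−q/(q+1), 1/(q+1)]` has a unique nega-`q`-ary representation,
then the generalized Salem function (regarded as a function of a real number via
any choice `D` of nega-`q` representations) is continuous at `x₀` within the interval. -/
theorem salem_continuous_at_nega_q_irrational
    (q : ℕ) (hq : 1 < q) (p : ℕ → ℝ)
    (hp : ∀ j < q, 0 < p j)
    (hps : ∑ j ∈ Finset.range q, p j = 1)
    (n : ℕ → ℕ) (hn1 : ∀ k, 1 ≤ n k) (hninj : Function.Injective n)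
    (hnsurj : ∀ m, 1 ≤ m → ∃ k, n k = m)
    (D : ℝ → ℕ → ℕ)
    (hD : ∀ x ∈ Set.Icc (-(q : ℝ) / ((q : ℝ) + 1)) (1 / ((q : ℝ) + 1)),
      (∀ k, D x k < q) ∧ negaVal q (D x) = x)
    (x₀ : ℝ) (hx₀ : x₀ ∈ Set.Icc (-(q : ℝ) / ((q : ℝ) + 1)) (1 / ((q : ℝ) + 1)))
    (huniq : ∀ j : ℕ → ℕ, (∀ k, j k < q) → negaVal q j = x₀ → j = D x₀) :
    ContinuousWithinAt (fun x => salemVal q p n (D x))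
      (Set.Icc (-(q : ℝ) / ((q : ℝ) + 1)) (1 / ((q : ℝ) + 1))) x₀ :=
  salem_continuous_at_nega_q_irrational_general q hq p hp hps n D hD x₀ hx₀ huniq
end

section
/- Let q > 1 and p_0,…,p_{q−1} > 0 with ∑ p_j = 1, and take n_k = k for all k (so β̈_{i_k} uses β when k even, and β_{q−1−i_k} when k odd, similarly p̈). Then the function h : [−q/(q+1), 1/(q+1)] → ℝ given by h(x) = β̈_{i_1} + ∑_{k=2}^∞ (β̈_{i_k} ∏_{r=1}^{k−1} p̈_{i_r}) is well-defined (independent of the choice of representation at nega-q-rational points) and strictly increasing. -/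
/-- The Salem series for the identity enumeration `n_k = k`:
`β̈_{i_1} + ∑_{k≥2} β̈_{i_k} ∏_{r<k} p̈_{i_r}` (digit `i k` is at position `k+1`). -/
noncomputable def salemId (q : ℕ) (p : ℕ → ℝ) (i : ℕ → ℕ) : ℝ :=
  ∑' k : ℕ, ddBeta q p (i k) (k + 1) * ∏ r ∈ Finset.range k, ddP q p (i r) (r + 1)

/-!
Reflecting the digits at odd positions turns a nega-`q`-ary expansion `i` into a `q`-ary
expansion `a`; the nega-`q`-ary value of `i` becomes the `q`-ary value of `a` shifted by a
constant, and `salemId q p i` becomes the classical Salem function of `a` with weights `p`.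
The `q`-ary value is itself the Salem function with uniform weights `1/q`. For any positive
weights the Salem function compares two digit sequences in the same way: lexicographically at
the first differing digit, with equality exactly for the two expansions of a `q`-adic rational.
Hence equal (resp. smaller) nega-`q`-ary values give equal (resp. smaller) values of `salemId`.
-/

open Finset

section Salem

variable {q : ℕ} {p : ℕ → ℝ} {a b i : ℕ → ℕ}

lemma beta_succ (p : ℕ → ℝ) (n : ℕ) : beta p (n + 1) = beta p n + p n :=
  sum_range_succ p n

lemma beta_strictMonoOn (hp : ∀ j < q, 0 < p j) : StrictMonoOn (beta p) (Set.Iic q) :=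
  fun i _ j hj hij => sum_lt_sum_of_subset (range_subset_range.2 hij.le) (mem_range.2 hij)
    (by simp) (hp i (hij.trans_le hj)) fun k hk _ => (hp k ((mem_range.1 hk).trans_le hj)).le

lemma beta_pos (hp : ∀ j < q, 0 < p j) {n : ℕ} (hn0 : 0 < n) (hn : n ≤ q) : 0 < beta p n := by
  simpa [beta] using beta_strictMonoOn hp (Nat.zero_le q) hn hn0

lemma beta_nonneg (hp : ∀ j < q, 0 < p j) {n : ℕ} (hn : n ≤ q) : 0 ≤ beta p n :=
  n.eq_zero_or_pos.elim (fun h => by simp [h, beta]) fun h => (beta_pos hp h hn).le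

lemma beta_le_one (hp : ∀ j < q, 0 < p j) (hps : ∑ j ∈ range q, p j = 1) {n : ℕ} (hn : n ≤ q) :
    beta p n ≤ 1 :=
  hps ▸ (beta_strictMonoOn hp).monotoneOn hn (Set.mem_Iic.2 le_rfl) hn

/-- The classical Salem function: the distribution function of the Bernoulli measure with
digit weights `p`, evaluated at the point with `q`-ary digits `a`. -/
noncomputable def salem (p : ℕ → ℝ) (a : ℕ → ℕ) : ℝ :=
  ∑' k, beta p (a k) * ∏ r ∈ range k, p (a r)

lemma prod_weights_pos (hp : ∀ j < q, 0 < p j) (ha : ∀ k, a k < q) (k : ℕ) :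
    0 < ∏ r ∈ range k, p (a r) :=
  prod_pos fun r _ => hp _ (ha r)

lemma salem_term_nonneg (hp : ∀ j < q, 0 < p j) (ha : ∀ k, a k < q) (k : ℕ) :
    0 ≤ beta p (a k) * ∏ r ∈ range k, p (a r) :=
  mul_nonneg (beta_nonneg hp (ha k).le) (prod_weights_pos hp ha k).le

lemma sum_range_salem_add_prod_le_one (hp : ∀ j < q, 0 < p j)
    (hps : ∑ j ∈ range q, p j = 1) (ha : ∀ k, a k < q) (n : ℕ) :
    ∑ k ∈ range n, beta p (a k) * ∏ r ∈ range k, p (a r) + ∏ r ∈ range n, p (a r) ≤ 1 := by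
  induction n with
  | zero => simp
  | succ n ih =>
    have hP := prod_weights_pos hp ha n
    have hβ := beta_le_one hp hps (ha n)
    rw [beta_succ] at hβ
    rw [sum_range_succ, prod_range_succ]
    nlinarith

lemma summable_salem (hp : ∀ j < q, 0 < p j) (hps : ∑ j ∈ range q, p j = 1)
    (ha : ∀ k, a k < q) : Summable fun k => beta p (a k) * ∏ r ∈ range k, p (a r) :=
  summable_of_sum_range_le (salem_term_nonneg hp ha) fun n =>
    (le_add_of_nonneg_right (prod_weights_pos hp ha n).le).trans
      (sum_range_salem_add_prod_le_one hp hps ha n)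

lemma salem_nonneg (hp : ∀ j < q, 0 < p j) (ha : ∀ k, a k < q) : 0 ≤ salem p a :=
  tsum_nonneg (salem_term_nonneg hp ha)

lemma salem_le_one (hp : ∀ j < q, 0 < p j) (hps : ∑ j ∈ range q, p j = 1)
    (ha : ∀ k, a k < q) : salem p a ≤ 1 :=
  (summable_salem hp hps ha).tsum_le_of_sum_range_le fun n =>
    (le_add_of_nonneg_right (prod_weights_pos hp ha n).le).trans
      (sum_range_salem_add_prod_le_one hp hps ha n)

lemma salem_eq_add_mul_tail (hp : ∀ j < q, 0 < p j) (hps : ∑ j ∈ range q, p j = 1)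
    (ha : ∀ k, a k < q) :
    salem p a = beta p (a 0) + p (a 0) * salem p (fun n => a (n + 1)) := by
  rw [salem, (summable_salem hp hps ha).tsum_eq_zero_add, salem, ← tsum_mul_left]
  simp only [range_zero, prod_empty, mul_one, prod_range_succ']
  exact congrArg _ (tsum_congr fun k => by ring)

lemma salem_eq_zero_iff (hp : ∀ j < q, 0 < p j) (hps : ∑ j ∈ range q, p j = 1)
    (ha : ∀ k, a k < q) : salem p a = 0 ↔ ∀ k, a k = 0 := by
  refine ⟨fun h k => ?_, fun h => by simp [salem, h, beta]⟩
  by_contra hk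
  exact h.not_gt <| (summable_salem hp hps ha).tsum_pos (salem_term_nonneg hp ha) k <|
    mul_pos (beta_pos hp (Nat.pos_of_ne_zero hk) (ha k).le) (prod_weights_pos hp ha k)

lemma head_eq_and_salem_tail_eq_one (hp : ∀ j < q, 0 < p j) (hps : ∑ j ∈ range q, p j = 1)
    (ha : ∀ k, a k < q) (h : salem p a = 1) :
    a 0 = q - 1 ∧ salem p (fun n => a (n + 1)) = 1 := by
  have hS := salem_le_one hp hps fun n => ha (n + 1)
  have hpa := hp _ (ha 0)
  rw [salem_eq_add_mul_tail hp hps ha] at h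
  have hβ : beta p (a 0 + 1) = 1 :=
    le_antisymm (beta_le_one hp hps (ha 0)) (by rw [beta_succ]; nlinarith)
  refine ⟨?_, ?_⟩
  · have := (beta_strictMonoOn hp).injOn (ha 0 : a 0 + 1 ≤ q) (Set.mem_Iic.2 le_rfl)
      (hβ.trans hps.symm)
    omega
  · rw [beta_succ] at hβ
    exact (mul_eq_left₀ hpa.ne').1 (by linarith)

lemma salem_eq_one_iff (hq : 1 < q) (hp : ∀ j < q, 0 < p j) (hps : ∑ j ∈ range q, p j = 1)
    (ha : ∀ k, a k < q) : salem p a = 1 ↔ ∀ k, a k = q - 1 := by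
  constructor
  · intro h k
    induction k generalizing a with
    | zero => exact (head_eq_and_salem_tail_eq_one hp hps ha h).1
    | succ k ih =>
      exact ih (fun n => ha (n + 1)) (head_eq_and_salem_tail_eq_one hp hps ha h).2
  · intro h
    have hrec := salem_eq_add_mul_tail hp hps ha
    rw [show (fun n => a (n + 1)) = a from funext fun n => by rw [h, h], h 0] at hrec
    have hsum : beta p (q - 1) + p (q - 1) = 1 := by
      rw [← beta_succ, Nat.sub_add_cancel hq.le]
      exact hps
    -- `salem p a` is the fixed point of `x ↦ β_{q-1} + p_{q-1} x`, and `β_{q-1} ≠ 0`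
    have hfix : beta p (q - 1) * (salem p a - 1) = 0 := by
      linear_combination hrec + salem p a * hsum
    exact sub_eq_zero.1 ((mul_eq_zero.1 hfix).resolve_left (beta_pos hp (by omega) (by omega)).ne')

lemma salem_sub_salem (hp : ∀ j < q, 0 < p j) (hps : ∑ j ∈ range q, p j = 1)
    (ha : ∀ k, a k < q) (hb : ∀ k, b k < q) :
    salem p b - salem p a = (beta p (b 0) - beta p (a 0 + 1))
      + p (b 0) * salem p (fun n => b (n + 1))
      + p (a 0) * (1 - salem p (fun n => a (n + 1))) := by
  rw [salem_eq_add_mul_tail hp hps ha, salem_eq_add_mul_tail hp hps hb, beta_succ]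
  ring

lemma salem_le_salem_of_head_lt (hp : ∀ j < q, 0 < p j) (hps : ∑ j ∈ range q, p j = 1)
    (ha : ∀ k, a k < q) (hb : ∀ k, b k < q) (h : a 0 < b 0) : salem p a ≤ salem p b := by
  have hβ := (beta_strictMonoOn hp).monotoneOn (ha 0 : a 0 + 1 ≤ q) (hb 0).le h
  have hSb := salem_nonneg hp fun n => hb (n + 1)
  have hSa := salem_le_one hp hps fun n => ha (n + 1)
  have := salem_sub_salem hp hps ha hb
  nlinarith [hp _ (ha 0), hp _ (hb 0)]

lemma salem_eq_salem_iff_of_head_lt (hp : ∀ j < q, 0 < p j) (hps : ∑ j ∈ range q, p j = 1)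
    (ha : ∀ k, a k < q) (hb : ∀ k, b k < q) (h : a 0 < b 0) :
    salem p a = salem p b ↔ b 0 = a 0 + 1 ∧ (∀ n, b (n + 1) = 0) ∧ ∀ n, a (n + 1) = q - 1 := by
  have hβ := (beta_strictMonoOn hp).monotoneOn (ha 0 : a 0 + 1 ≤ q) (hb 0).le h
  have hb0 := hp _ (hb 0)
  have ha0 := hp _ (ha 0)
  have hSb := salem_nonneg hp fun n => hb (n + 1)
  have hSa := salem_le_one hp hps fun n => ha (n + 1)
  rw [eq_comm, ← sub_eq_zero, salem_sub_salem hp hps ha hb,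
    add_eq_zero_iff_of_nonneg (by positivity) (mul_nonneg ha0.le (by linarith)),
    add_eq_zero_iff_of_nonneg (by linarith) (by positivity), sub_eq_zero, mul_eq_zero,
    mul_eq_zero, sub_eq_zero, or_iff_right hb0.ne', or_iff_right ha0.ne', eq_comm (a := 1),
    salem_eq_zero_iff hp hps fun n => hb (n + 1),
    salem_eq_one_iff (by have := hb 0; omega) hp hps fun n => ha (n + 1), and_assoc]
  refine and_congr_left' ⟨fun hβeq => ?_, fun hb0 => by rw [hb0]⟩
  exact (beta_strictMonoOn hp).injOn (hb 0).le (ha 0 : a 0 + 1 ≤ q) hβeq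

lemma salem_lt_salem_iff_of_eqOn (hp : ∀ j < q, 0 < p j) (hps : ∑ j ∈ range q, p j = 1)
    (ha : ∀ k, a k < q) (hb : ∀ k, b k < q) {k : ℕ} (hab : ∀ r < k, a r = b r) :
    salem p a < salem p b ↔ salem p (fun n => a (k + n)) < salem p (fun n => b (k + n)) := by
  induction k generalizing a b with
  | zero => simp only [zero_add]
  | succ k ih =>
    rw [salem_eq_add_mul_tail hp hps ha, salem_eq_add_mul_tail hp hps hb, hab 0 k.succ_pos,
      add_lt_add_iff_left, mul_lt_mul_iff_right₀ (hp _ (hb 0)),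
      ih (fun n => ha _) (fun n => hb _) fun r hr => hab _ (by omega)]
    simp only [Nat.add_right_comm k _ 1]

lemma salem_le_salem_of_lex (hp : ∀ j < q, 0 < p j) (hps : ∑ j ∈ range q, p j = 1)
    (ha : ∀ k, a k < q) (hb : ∀ k, b k < q) {k : ℕ} (hab : ∀ r < k, a r = b r) (hk : a k < b k) :
    salem p a ≤ salem p b := by
  refine not_lt.1 fun hlt => ?_
  rw [salem_lt_salem_iff_of_eqOn hp hps hb ha fun r hr => (hab r hr).symm] at hlt
  exact hlt.not_ge (salem_le_salem_of_head_lt hp hps (fun n => ha _) (fun n => hb _) hk)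

lemma salem_lt_salem_iff_of_lex (hp : ∀ j < q, 0 < p j) (hps : ∑ j ∈ range q, p j = 1)
    (ha : ∀ k, a k < q) (hb : ∀ k, b k < q) {k : ℕ} (hab : ∀ r < k, a r = b r) (hk : a k < b k) :
    salem p a < salem p b ↔
      ¬ (b k = a k + 1 ∧ (∀ n, k < n → b n = 0) ∧ ∀ n, k < n → a n = q - 1) := by
  have hshift : ∀ (f : ℕ → ℕ) (c : ℕ), (∀ n, f (k + (n + 1)) = c) ↔ ∀ n, k < n → f n = c :=
    fun f c => ⟨fun h n hn => by obtain ⟨m, rfl⟩ := Nat.exists_eq_add_of_lt hn; exact h m,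
      fun h n => h _ (by omega)⟩
  have ha' : ∀ n, a (k + n) < q := fun n => ha _
  have hb' : ∀ n, b (k + n) < q := fun n => hb _
  rw [salem_lt_salem_iff_of_eqOn hp hps ha hb hab,
    (salem_le_salem_of_head_lt hp hps ha' hb' hk).lt_iff_ne, ne_eq,
    salem_eq_salem_iff_of_head_lt hp hps ha' hb' hk, hshift b 0, hshift a (q - 1), Nat.add_zero]

/-- The lexicographic order on digit sequences, except that the two expansions
`… x (q-1) (q-1) …` and `… (x+1) 0 0 …` of a `q`-adic rational are not comparable. -/
def DigitsLT (q : ℕ) (a b : ℕ → ℕ) : Prop :=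
  ∃ k, (∀ r < k, a r = b r) ∧ a k < b k ∧
    ¬ (b k = a k + 1 ∧ (∀ n, k < n → b n = 0) ∧ ∀ n, k < n → a n = q - 1)

theorem salem_lt_salem_iff (hp : ∀ j < q, 0 < p j) (hps : ∑ j ∈ range q, p j = 1)
    (ha : ∀ k, a k < q) (hb : ∀ k, b k < q) : salem p a < salem p b ↔ DigitsLT q a b := by
  refine ⟨fun hlt => ?_, fun ⟨k, hab, hk, hnot⟩ =>
    (salem_lt_salem_iff_of_lex hp hps ha hb hab hk).2 hnot⟩
  rcases lt_trichotomy (toLex a) (toLex b) with ⟨k, hab, hk⟩ | heq | ⟨k, hba, hk⟩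
  · exact ⟨k, hab, hk, (salem_lt_salem_iff_of_lex hp hps ha hb hab hk).1 hlt⟩
  · exact absurd hlt (toLex.injective heq ▸ lt_irrefl _)
  · exact absurd hlt (salem_le_salem_of_lex hp hps hb ha hba hk).not_gt

theorem salem_eq_salem_iff (hp : ∀ j < q, 0 < p j) (hps : ∑ j ∈ range q, p j = 1)
    (ha : ∀ k, a k < q) (hb : ∀ k, b k < q) :
    salem p a = salem p b ↔ ¬ DigitsLT q a b ∧ ¬ DigitsLT q b a := by
  rw [← salem_lt_salem_iff hp hps ha hb, ← salem_lt_salem_iff hp hps hb ha, not_lt, not_lt,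
    le_antisymm_iff, and_comm]

lemma uniform_weights_pos (hq : 0 < q) : ∀ j < q, 0 < (fun _ => (q : ℝ)⁻¹) j :=
  fun _ _ => by positivity

lemma sum_uniform_weights (hq : 0 < q) :
    ∑ j ∈ range q, (fun _ => (q : ℝ)⁻¹) j = 1 := by
  simp [hq.ne']

/-- Digit `k` sits at position `k + 1`, so the digits at odd positions are the reflected ones. -/
def flipDigits (q : ℕ) (i : ℕ → ℕ) (k : ℕ) : ℕ := if Even k then q - 1 - i k else i k

lemma flipDigits_lt (hi : ∀ k, i k < q) (k : ℕ) : flipDigits q i k < q := by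
  unfold flipDigits
  split_ifs <;> have := hi k <;> omega

lemma salemId_eq_salem : salemId q p i = salem p (flipDigits q i) := by
  simp only [salemId, salem, ddBeta, ddP, flipDigits, Nat.even_add_one, apply_ite (beta p),
    apply_ite p, ite_not]

lemma negaVal_eq_salem_sub (hi : ∀ k, i k < q) :
    negaVal q i = salem (fun _ => (q : ℝ)⁻¹) (flipDigits q i)
      - salem (fun _ => (q : ℝ)⁻¹) (flipDigits q 0) := by
  have hq : 0 < q := Nat.zero_lt_of_lt (hi 0)
  have hsummable := fun (j : ℕ → ℕ) (hj : ∀ k, j k < q) =>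
    summable_salem (uniform_weights_pos hq) (sum_uniform_weights hq) (flipDigits_lt hj)
  rw [salem, salem, ← (hsummable i hi).tsum_sub (hsummable 0 fun _ => hq), negaVal]
  refine tsum_congr fun k => ?_
  simp only [beta, flipDigits, sum_const, card_range, nsmul_eq_mul, prod_const, Pi.zero_apply,
    Nat.sub_zero, inv_pow]
  rcases Nat.even_or_odd k with hk | hk
  · rw [if_pos hk, if_pos hk, hk.add_one.neg_pow, Nat.cast_sub (by have := hi k; omega),
      Nat.cast_sub hq]
    field_simp
    ring
  · rw [if_neg (Nat.not_even_iff_odd.2 hk), if_neg (Nat.not_even_iff_odd.2 hk),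
      hk.add_one.neg_pow]
    field_simp
    ring

end Salem

theorem salemId_well_defined_and_strict_mono_general
    (q : ℕ) (p : ℕ → ℝ)
    (hp : ∀ j < q, 0 < p j)
    (hps : ∑ j ∈ Finset.range q, p j = 1) :
    (∀ i j : ℕ → ℕ, (∀ k, i k < q) → (∀ k, j k < q) →
      negaVal q i = negaVal q j → salemId q p i = salemId q p j) ∧
    (∀ i j : ℕ → ℕ, (∀ k, i k < q) → (∀ k, j k < q) →
      negaVal q i < negaVal q j → salemId q p i < salemId q p j) := by
  constructor
  · intro i j hi hj h
    have hq : 0 < q := Nat.zero_lt_of_lt (hi 0)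
    rw [negaVal_eq_salem_sub hi, negaVal_eq_salem_sub hj, sub_left_inj,
      salem_eq_salem_iff (uniform_weights_pos hq) (sum_uniform_weights hq) (flipDigits_lt hi)
        (flipDigits_lt hj)] at h
    rwa [salemId_eq_salem, salemId_eq_salem,
      salem_eq_salem_iff hp hps (flipDigits_lt hi) (flipDigits_lt hj)]
  · intro i j hi hj h
    have hq : 0 < q := Nat.zero_lt_of_lt (hi 0)
    rw [negaVal_eq_salem_sub hi, negaVal_eq_salem_sub hj, sub_lt_sub_iff_right,
      salem_lt_salem_iff (uniform_weights_pos hq) (sum_uniform_weights hq) (flipDigits_lt hi)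
        (flipDigits_lt hj)] at h
    rwa [salemId_eq_salem, salemId_eq_salem,
      salem_lt_salem_iff hp hps (flipDigits_lt hi) (flipDigits_lt hj)]

/-- For `n_k = k`, the Salem function is well defined on
`[−q/(q+1), 1/(q+1)]` (independent of the representation) and strictly increasing. -/
theorem salemId_well_defined_and_strict_mono
    (q : ℕ) (hq : 1 < q) (p : ℕ → ℝ)
    (hp : ∀ j < q, 0 < p j)
    (hps : ∑ j ∈ Finset.range q, p j = 1) :
    (∀ i j : ℕ → ℕ, (∀ k, i k < q) → (∀ k, j k < q) →
      negaVal q i = negaVal q j → salemId q p i = salemId q p j) ∧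
    (∀ i j : ℕ → ℕ, (∀ k, i k < q) → (∀ k, j k < q) →
      negaVal q i < negaVal q j → salemId q p i < salemId q p j) :=
  salemId_well_defined_and_strict_mono_general q p hp hps
end

section
/- Let q > 1 and p_0,…,p_{q−1} ∈ [0,1] with ∑ p_j = 1, and suppose some p_{j_0} = 0. Then the generalized Salem function h (for the identity sequence n_k = k) is constant on every cylinder Λ^{−q}_{c_1…c_r} whose base contains a digit c_m with p̈_{c_m} = 0; consequently h is locally constant almost everywhere on [−q/(q+1), 1/(q+1)] with respect to Lebesgue measure. -/
open MeasureTheory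

/-!
Proof idea: on a cylinder whose base contains a digit with `p̈ = 0`, every term of the Salem
series beyond that position carries the factor `p̈ = 0`, so the series depends only on the base.
For the almost-everywhere statement let `a` be the digit sequence with `p̈_{a m} = 0` at every
position (`j₀` at even, `q - 1 - j₀` at odd positions). The points whose expansion avoids `a`
everywhere form a null set: after `N` digits they lie in `(q - 1)^N` intervals of length
`2 q⁻ᴺ`. Any other point, off the countably many cylinder endpoints, lies in the interior of
its rank-`(m + 1)` cylinder, where `m` is a position with digit `a m`, and the Salem function is
constant there.
-/

open Finset

lemma summable_negaVal {q : ℕ} (hq : 1 < q) {i : ℕ → ℕ} (hi : ∀ k, i k < q) :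
    Summable fun k => (i k : ℝ) / (-(q : ℝ)) ^ (k + 1) := by
  have hq0 : (0 : ℝ) < q := by positivity
  refine Summable.of_norm_bounded (summable_geometric_of_lt_one (by positivity)
    (inv_lt_one_of_one_lt₀ (by exact_mod_cast hq))) fun k => ?_
  rw [Real.norm_eq_abs, abs_div, abs_pow, abs_neg, Nat.abs_cast, Nat.abs_cast]
  calc (i k : ℝ) / (q : ℝ) ^ (k + 1) ≤ q / (q : ℝ) ^ (k + 1) := by gcongr; exact_mod_cast (hi k).le
    _ = (q : ℝ)⁻¹ ^ k := by rw [pow_succ, inv_pow]; field_simp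

lemma hasSum_pow_succ {r : ℝ} (hr : |r| < 1) : HasSum (fun n => r ^ (n + 1)) (r / (1 - r)) := by
  simpa only [pow_succ', div_eq_mul_inv] using (hasSum_geometric_of_abs_lt_one hr).mul_left r

lemma half_mul_sub_abs_le_mul {c d : ℝ} (hd : 0 ≤ d) (hdc : d ≤ c) (s : ℝ) :
    c / 2 * (s - |s|) ≤ d * s := by
  cases abs_cases s <;> nlinarith

lemma mul_le_half_mul_add_abs {c d : ℝ} (hd : 0 ≤ d) (hdc : d ≤ c) (s : ℝ) :
    d * s ≤ c / 2 * (s + |s|) := by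
  cases abs_cases s <;> nlinarith

/-- Termwise, `d s` lies between `(q - 1)/2 (s - |s|)` and `(q - 1)/2 (s + |s|)`, the terms of the
extremal expansions `(q-1) 0 (q-1) 0 …` and `0 (q-1) 0 (q-1) …`. -/
theorem negaVal_mem_Icc {q : ℕ} (hq : 1 < q) {i : ℕ → ℕ} (hi : ∀ k, i k < q) :
    negaVal q i ∈ Set.Icc (-(q : ℝ) / ((q : ℝ) + 1)) (1 / ((q : ℝ) + 1)) := by
  set σ : ℝ := (-(q : ℝ))⁻¹
  have hq1 : (1 : ℝ) < q := by exact_mod_cast hq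
  have hσ : |σ| = (q : ℝ)⁻¹ := by rw [abs_inv, abs_neg, Nat.abs_cast]
  have hσ1 : |σ| < 1 := hσ ▸ inv_lt_one_of_one_lt₀ hq1
  have hval : HasSum (fun k => (i k : ℝ) * σ ^ (k + 1)) (negaVal q i) := by
    simpa only [negaVal, div_eq_mul_inv, ← inv_pow] using (summable_negaVal hq hi).hasSum
  have hσ1' : |(|σ|)| < 1 := by rwa [abs_abs]
  have hlower := (hasSum_pow_succ hσ1).sub (hasSum_pow_succ hσ1')
  have hupper := (hasSum_pow_succ hσ1).add (hasSum_pow_succ hσ1')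
  have hdig : ∀ k, (0 : ℝ) ≤ i k ∧ (i k : ℝ) ≤ q - 1 := fun k =>
    ⟨Nat.cast_nonneg _, by have := hi k; rw [le_sub_iff_add_le]; exact_mod_cast this⟩
  have hσq : σ = -(q : ℝ)⁻¹ := inv_neg
  have hq' : (q : ℝ) - 1 ≠ 0 := by linarith
  constructor
  · refine le_trans (le_of_eq ?_)
      (hasSum_le (fun k => ?_) (hlower.mul_left (((q : ℝ) - 1) / 2)) hval)
    · rw [hσ, hσq]; field_simp; ring
    · simpa only [abs_pow] using half_mul_sub_abs_le_mul (hdig k).1 (hdig k).2 (σ ^ (k + 1))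
  · refine le_trans (hasSum_le (fun k => ?_) hval (hupper.mul_left (((q : ℝ) - 1) / 2)))
      (le_of_eq ?_)
    · simpa only [abs_pow] using mul_le_half_mul_add_abs (hdig k).1 (hdig k).2 (σ ^ (k + 1))
    · rw [hσ, hσq]; field_simp; ring

/-- The integer `∑_{k<r} i k * (-q)^(r-1-k)`, computed by Horner's rule. -/
def negaPrefixInt (q : ℕ) (i : ℕ → ℕ) : ℕ → ℤ
  | 0 => 0
  | r + 1 => -(q : ℤ) * negaPrefixInt q i r + i r

lemma negaPrefixInt_congr (q : ℕ) {i j : ℕ → ℕ} {r : ℕ} (h : ∀ k < r, i k = j k) :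
    negaPrefixInt q i r = negaPrefixInt q j r := by
  induction r with
  | zero => rfl
  | succ r ih =>
    simp only [negaPrefixInt, ih fun k hk => h k (by omega), h r (by omega)]

lemma negaVal_mul_neg {q : ℕ} (hq : 1 < q) {i : ℕ → ℕ} (hi : ∀ k, i k < q) :
    negaVal q i * -(q : ℝ) = i 0 + negaVal q (fun k => i (k + 1)) := by
  have hq0 : -(q : ℝ) ≠ 0 := by simp; omega
  rw [negaVal, (summable_negaVal hq hi).tsum_eq_zero_add, add_mul, negaVal, ← tsum_mul_right]
  congr 1
  · rw [zero_add, pow_one, div_mul_cancel₀ _ hq0]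
  · refine tsum_congr fun k => ?_
    rw [pow_succ _ (k + 1)]
    field_simp

theorem negaVal_mul_pow {q : ℕ} (hq : 1 < q) {i : ℕ → ℕ} (hi : ∀ k, i k < q) (r : ℕ) :
    negaVal q i * (-(q : ℝ)) ^ r = negaPrefixInt q i r + negaVal q (fun k => i (k + r)) := by
  induction r with
  | zero => simp [negaPrefixInt]
  | succ r ih =>
    rw [pow_succ, ← mul_assoc, ih, add_mul, negaVal_mul_neg hq fun k => hi _]
    simp only [negaPrefixInt, Nat.zero_add, Int.cast_add, Int.cast_mul, Int.cast_neg,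
      Int.cast_natCast, Nat.add_right_comm _ 1 r, Nat.add_assoc]
    ring

theorem negaDigits_eq_of_negaPrefixInt_eq {q : ℕ} (hq : 1 < q) {i j : ℕ → ℕ}
    (hi : ∀ k, i k < q) (hj : ∀ k, j k < q) {r : ℕ}
    (h : negaPrefixInt q i r = negaPrefixInt q j r) : ∀ k < r, i k = j k := by
  induction r with
  | zero => intro k hk; omega
  | succ r ih =>
    simp only [negaPrefixInt] at h
    have hlast : i r = j r := by
      have hdvd : (q : ℤ) ∣ (i r : ℤ) - j r :=
        ⟨negaPrefixInt q i r - negaPrefixInt q j r, by linarith⟩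
      have := Int.eq_zero_of_abs_lt_dvd hdvd (by have := hi r; have := hj r; rw [abs_lt]; omega)
      omega
    have hq0 : -(q : ℤ) ≠ 0 := by omega
    have hprev := ih (mul_left_cancel₀ hq0 (by rw [hlast] at h; linarith))
    intro k hk
    rcases Nat.lt_succ_iff_lt_or_eq.1 hk with hk | rfl
    exacts [hprev k hk, hlast]

lemma abs_negaVal_le_one {q : ℕ} (hq : 1 < q) {i : ℕ → ℕ} (hi : ∀ k, i k < q) :
    |negaVal q i| ≤ 1 := by
  obtain ⟨hlo, hhi⟩ := negaVal_mem_Icc hq hi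
  have hq0 : (0 : ℝ) < q := by positivity
  rw [abs_le]
  constructor
  · refine le_trans ?_ hlo
    rw [le_div_iff₀ (by positivity)]; linarith
  · refine hhi.trans ?_
    rw [div_le_one (by positivity)]; linarith

lemma abs_negaVal_sub_le {q : ℕ} (hq : 1 < q) {i : ℕ → ℕ} (hi : ∀ k, i k < q) (r : ℕ) :
    |negaVal q i - negaPrefixInt q i r / (-(q : ℝ)) ^ r| ≤ ((q : ℝ) ^ r)⁻¹ := by
  have hpow : (-(q : ℝ)) ^ r ≠ 0 := pow_ne_zero _ (by simp; omega)
  have htail : negaVal q i - negaPrefixInt q i r / (-(q : ℝ)) ^ r =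
      negaVal q (fun k => i (k + r)) / (-(q : ℝ)) ^ r := by
    rw [eq_div_iff hpow, sub_mul, div_mul_cancel₀ _ hpow, negaVal_mul_pow hq hi]
    ring
  rw [htail, abs_div, abs_pow, abs_neg, Nat.abs_cast, div_eq_mul_inv]
  exact mul_le_of_le_one_left (by positivity) (abs_negaVal_le_one hq fun k => hi _)

lemma volume_image_negaVal_avoiding_le {q : ℕ} (hq : 1 < q) {a : ℕ → ℕ} (ha : ∀ k, a k < q)
    (N : ℕ) :
    volume (negaVal q '' {i | (∀ k, i k < q) ∧ ∀ k, i k ≠ a k}) ≤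
      ENNReal.ofReal (2 * (((q : ℝ) - 1) / q) ^ N) := by
  set S := Fintype.piFinset fun k : Fin N => univ.erase (⟨a k, ha k⟩ : Fin q)
  set center : (Fin N → Fin q) → ℝ := fun c =>
    negaPrefixInt q (fun k => if h : k < N then c ⟨k, h⟩ else 0) N / (-(q : ℝ)) ^ N
  set s : ℝ := ((q : ℝ) ^ N)⁻¹
  have hcover : negaVal q '' {i | (∀ k, i k < q) ∧ ∀ k, i k ≠ a k} ⊆
      ⋃ c ∈ S, Set.Icc (center c - s) (center c + s) := by
    rintro _ ⟨i, ⟨hi, hia⟩, rfl⟩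
    have hcS : (fun k : Fin N => (⟨i k, hi k⟩ : Fin q)) ∈ S := by
      simpa [S, Fin.ext_iff] using fun k : Fin N => hia k
    refine Set.mem_biUnion hcS ?_
    have hcenter : center (fun k => ⟨i k, hi k⟩) = negaPrefixInt q i N / (-(q : ℝ)) ^ N := by
      simp only [center]
      rw [negaPrefixInt_congr q (j := i) fun k hk => by simp [hk]]
    rw [hcenter, ← Set.mem_Icc_iff_abs_le, abs_sub_comm]
    exact abs_negaVal_sub_le hq hi N
  have hcard : S.card = (q - 1) ^ N := by simp [S]
  calc _ ≤ volume (⋃ c ∈ S, Set.Icc (center c - s) (center c + s)) := measure_mono hcover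
    _ ≤ ∑ c ∈ S, volume (Set.Icc (center c - s) (center c + s)) := measure_biUnion_finset_le _ _
    _ = S.card * ENNReal.ofReal (2 * s) := by simp [Real.volume_Icc, two_mul]
    _ = ENNReal.ofReal (2 * (((q : ℝ) - 1) / q) ^ N) := by
      rw [hcard, ← ENNReal.ofReal_natCast, ← ENNReal.ofReal_mul (by positivity)]
      congr 1
      push_cast [Nat.cast_sub hq.le]
      rw [div_pow]
      ring

theorem volume_image_negaVal_avoiding {q : ℕ} (hq : 1 < q) {a : ℕ → ℕ} (ha : ∀ k, a k < q) :
    volume (negaVal q '' {i | (∀ k, i k < q) ∧ ∀ k, i k ≠ a k}) = 0 := by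
  have hq1 : (1 : ℝ) < q := by exact_mod_cast hq
  have hρ : ((q : ℝ) - 1) / q < 1 := by rw [div_lt_one (by positivity)]; linarith
  have hlim := ENNReal.tendsto_ofReal
    ((tendsto_pow_atTop_nhds_zero_of_lt_one (by positivity) hρ).const_mul 2)
  rw [mul_zero, ENNReal.ofReal_zero] at hlim
  exact le_antisymm (ge_of_tendsto' hlim (volume_image_negaVal_avoiding_le hq ha)) bot_le

def negaCylinderEndpoints (q : ℕ) : Set ℝ :=
  ⋃ (r : ℕ) (n : ℤ), {(n - q / (q + 1)) / (-(q : ℝ)) ^ r, (n + 1 / (q + 1)) / (-(q : ℝ)) ^ r}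

lemma countable_negaCylinderEndpoints (q : ℕ) : (negaCylinderEndpoints q).Countable :=
  Set.countable_iUnion fun _ => Set.countable_iUnion fun _ => (Set.countable_singleton _).insert _

/-- Off the endpoints, `negaVal q i * (-q)^r` is an integer plus a tail lying in the *open*
interval of length one; a nearby expansion then has the same integer part, i.e. the same
first `r` digits. -/
theorem exists_forall_negaDigits_eq {q : ℕ} (hq : 1 < q) {i : ℕ → ℕ} (hi : ∀ k, i k < q)
    (r : ℕ) (hx : negaVal q i ∉ negaCylinderEndpoints q) :
    ∃ ε > 0, ∀ j : ℕ → ℕ, (∀ k, j k < q) → |negaVal q j - negaVal q i| < ε →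
      ∀ k < r, j k = i k := by
  set lo : ℝ := -(q : ℝ) / (q + 1)
  set up : ℝ := 1 / (q + 1)
  set v := negaVal q (fun k => i (k + r))
  have hlen : up - lo = 1 := by simp only [up, lo]; field_simp; ring
  have hpow : (-(q : ℝ)) ^ r ≠ 0 := pow_ne_zero _ (by simp; omega)
  have hxv : negaVal q i = (negaPrefixInt q i r + v) / (-(q : ℝ)) ^ r :=
    eq_div_of_mul_eq hpow (negaVal_mul_pow hq hi r)
  obtain ⟨hv₁, hv₂⟩ : lo ≤ v ∧ v ≤ up := negaVal_mem_Icc hq fun k => hi (k + r)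
  have hlo : lo < v := hv₁.lt_of_ne fun h => hx <| Set.mem_iUnion₂.2
    ⟨r, negaPrefixInt q i r, Or.inl (by rw [hxv, ← h]; simp only [lo]; ring)⟩
  have hup : v < up := hv₂.lt_of_ne fun h => hx <| Set.mem_iUnion₂.2
    ⟨r, negaPrefixInt q i r, Or.inr (by rw [hxv, h]; rfl)⟩
  have hε : 0 < min (v - lo) (up - v) / (q : ℝ) ^ r := by
    have := sub_pos.2 hlo; have := sub_pos.2 hup; positivity
  refine ⟨_, hε, fun j hj hxy => ?_⟩
  obtain ⟨hw₁, hw₂⟩ := negaVal_mem_Icc hq fun k => hj (k + r)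
  have hscaled : |(negaVal q j - negaVal q i) * (-(q : ℝ)) ^ r| < min (v - lo) (up - v) := by
    rwa [abs_mul, abs_pow, abs_neg, Nat.abs_cast, ← lt_div_iff₀ (by positivity)]
  rw [sub_mul, negaVal_mul_pow hq hj, negaVal_mul_pow hq hi, abs_lt] at hscaled
  have hz : |((negaPrefixInt q j r - negaPrefixInt q i r : ℤ) : ℝ)| < 1 := by
    rw [abs_lt]
    push_cast
    constructor <;> linarith [min_le_left (v - lo) (up - v), min_le_right (v - lo) (up - v)]
  have hzeq := Int.abs_lt_one_iff.1 (by exact_mod_cast hz)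
  exact negaDigits_eq_of_negaPrefixInt_eq hq hj hi (by omega)

theorem salemId_eq_of_ddP_eq_zero (q : ℕ) (p : ℕ → ℝ) {i j : ℕ → ℕ} {m : ℕ}
    (hm : ddP q p (i m) (m + 1) = 0) (hij : ∀ k ≤ m, i k = j k) :
    salemId q p i = salemId q p j := by
  refine tsum_congr fun k => ?_
  by_cases hk : k ≤ m
  · rw [hij k hk, prod_congr rfl fun r hr => by rw [hij r (by rw [mem_range] at hr; omega)]]
  · have hmk : m ∈ range k := mem_range.2 (by omega)
    rw [prod_eq_zero hmk hm, prod_eq_zero hmk (by rwa [← hij m le_rfl]), mul_zero, mul_zero]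

theorem salem_constant_ae_when_some_p_zero_general
    (q : ℕ) (hq : 1 < q) (p : ℕ → ℝ)
    (hzero : ∃ j₀ < q, p j₀ = 0)
    (D : ℝ → ℕ → ℕ)
    (hD : ∀ x ∈ Set.Icc (-(q : ℝ) / ((q : ℝ) + 1)) (1 / ((q : ℝ) + 1)),
      (∀ k, D x k < q) ∧ negaVal q (D x) = x) :
    (∀ (r : ℕ) (c : ℕ → ℕ), (∀ m < r, c m < q) →
      (∃ m < r, ddP q p (c m) (m + 1) = 0) →
      ∀ i j : ℕ → ℕ, (∀ k, i k < q) → (∀ k, j k < q) →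
        (∀ m < r, i m = c m) → (∀ m < r, j m = c m) →
        salemId q p i = salemId q p j) ∧
    (∀ᵐ x ∂(volume.restrict (Set.Icc (-(q : ℝ) / ((q : ℝ) + 1)) (1 / ((q : ℝ) + 1)))),
      ∃ ε > (0 : ℝ), ∀ y ∈ Set.Icc (-(q : ℝ) / ((q : ℝ) + 1)) (1 / ((q : ℝ) + 1)),
        |y - x| < ε → salemId q p (D y) = salemId q p (D x)) := by
  refine ⟨fun r c _ ⟨m, hmr, hm⟩ i j _ _ hic hjc =>
    salemId_eq_of_ddP_eq_zero q p (by rwa [hic m hmr]) fun k hk => by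
      rw [hic k (by omega), hjc k (by omega)], ?_⟩
  obtain ⟨j₀, hj₀, hpj₀⟩ := hzero
  set a : ℕ → ℕ := fun m => if Even (m + 1) then j₀ else q - 1 - j₀
  have ha : ∀ m, a m < q := fun m => by simp only [a]; split_ifs <;> omega
  have hpa : ∀ m, ddP q p (a m) (m + 1) = 0 := fun m => by
    simp only [a, ddP]; split_ifs <;> simp [Nat.sub_sub_self (by omega : j₀ ≤ q - 1), hpj₀]
  have hnull := measure_union_null (volume_image_negaVal_avoiding hq ha)
    ((countable_negaCylinderEndpoints q).measure_zero volume)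
  rw [ae_restrict_iff' measurableSet_Icc]
  filter_upwards [measure_eq_zero_iff_ae_notMem.1 hnull] with x hx hxI
  obtain ⟨hDx, hvx⟩ := hD x hxI
  obtain ⟨m, hm⟩ : ∃ m, D x m = a m := by
    by_contra! h
    exact hx (Or.inl ⟨D x, ⟨hDx, h⟩, hvx⟩)
  obtain ⟨ε, hε, hdig⟩ :=
    exists_forall_negaDigits_eq hq hDx (m + 1) (by rw [hvx]; exact fun h => hx (Or.inr h))
  refine ⟨ε, hε, fun y hyI hyx => ?_⟩
  obtain ⟨hDy, hvy⟩ := hD y hyI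
  have hagree := hdig (D y) hDy (by rwa [hvx, hvy])
  exact (salemId_eq_of_ddP_eq_zero q p (hm ▸ hpa m) fun k hk => (hagree k (by omega)).symm).symm

/-- If some `p_{j₀} = 0`, the Salem function is constant on every cylinder whose
base contains a digit `c_m` with `p̈_{c_m} = 0`, and (realized on the reals via any
choice `D` of nega-`q` representations) is locally constant almost everywhere on
`[−q/(q+1), 1/(q+1)]`. -/
theorem salem_constant_ae_when_some_p_zero
    (q : ℕ) (hq : 1 < q) (p : ℕ → ℝ)
    (hp : ∀ j < q, p j ∈ Set.Icc (0 : ℝ) 1)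
    (hps : ∑ j ∈ Finset.range q, p j = 1)
    (hzero : ∃ j₀ < q, p j₀ = 0)
    (D : ℝ → ℕ → ℕ)
    (hD : ∀ x ∈ Set.Icc (-(q : ℝ) / ((q : ℝ) + 1)) (1 / ((q : ℝ) + 1)),
      (∀ k, D x k < q) ∧ negaVal q (D x) = x) :
    (∀ (r : ℕ) (c : ℕ → ℕ), (∀ m < r, c m < q) →
      (∃ m < r, ddP q p (c m) (m + 1) = 0) →
      ∀ i j : ℕ → ℕ, (∀ k, i k < q) → (∀ k, j k < q) →
        (∀ m < r, i m = c m) → (∀ m < r, j m = c m) →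
        salemId q p i = salemId q p j) ∧
    (∀ᵐ x ∂(volume.restrict (Set.Icc (-(q : ℝ) / ((q : ℝ) + 1)) (1 / ((q : ℝ) + 1)))),
      ∃ ε > (0 : ℝ), ∀ y ∈ Set.Icc (-(q : ℝ) / ((q : ℝ) + 1)) (1 / ((q : ℝ) + 1)),
        |y - x| < ε → salemId q p (D y) = salemId q p (D x)) :=
  salem_constant_ae_when_some_p_zero_general q hq p hzero D hD
end
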